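/- arXiv:1909.11850 — 2 statements merged into one kernel-verified Lean document; each statement's English description precedes it below -/
import Mathlib

section
/- Let P₀, …, P_L partition [1:m] with P₁, …, P_L nonempty, let Q ⊊ [1:L] with Q = {1, …, |Q|} (after relabeling), and let H'_Q ⊊ P₀ ∪ ⋃_{i∈Q} P_i be a proper subset. Consider the family ℱ obtained from the perfect L-nested family by replacing H_Q = P₀ ∪ ⋃_{i∈Q} P_i with H'_Q. For any t with 0 ≤ t ≤ |Q|−1, and any a chosen as: a ∈ P_{t+1} \ H'_Q if H'_Q ∩ P_{t+1} ≠ P_{t+1}, else a ∈ P_{t+1}, the set (P₀ ∪ P₁ ∪ ⋯ ∪ P_t) ∪ {a} is contained in a member of ℱ only if that member is of the form H_{Q'} with {1,…,t+1} ⊆ Q' (and in particular, after the final step t = |Q|−1, the set (P₀ ∪ ⋯ ∪ P_{|Q|−1}) ∪ {a} is not contained in H'_Q). -/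
/-- The skip-choice argument for the slightly imperfect L-nested
family. With Q = [1:s] (s = |Q|) and the absent receiver H_Q replaced by a
proper subset H'_Q, for any step 0 ≤ t ≤ s − 1 and skipped message a chosen as
a ∈ P_{t+1} \ H'_Q when P_{t+1} ⊄ H'_Q, else a ∈ P_{t+1}: any untouched member
H_{Q'} of the family containing (P₀ ∪ ⋯ ∪ P_t) ∪ {a} must satisfy
[1:t+1] ⊆ Q'; and at the final step t = s − 1 the set is not contained in
H'_Q. -/
theorem imperfect_nested_skip_choice
    (m L s : ℕ) (hm : 1 ≤ m) (hL : 1 ≤ L) (hs1 : 1 ≤ s) (hsL : s ≤ L - 1)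
    (P : ℕ → Set ℕ)
    (hdisj : ∀ i ≤ L, ∀ j ≤ L, i ≠ j → Disjoint (P i) (P j))
    (hunion : (⋃ i ∈ Set.Iic L, P i) = Set.Icc 1 m)
    (hne : ∀ i, 1 ≤ i → i ≤ L → (P i).Nonempty)
    (H'Q : Set ℕ) (hH' : H'Q ⊂ P 0 ∪ ⋃ i ∈ Finset.Icc 1 s, P i)
    (t : ℕ) (ht : t ≤ s - 1) (a : ℕ)
    (ha : (¬ P (t + 1) ⊆ H'Q ∧ a ∈ P (t + 1) \ H'Q) ∨
          (P (t + 1) ⊆ H'Q ∧ a ∈ P (t + 1))) :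
    (∀ Q' : Finset ℕ, Q' ⊂ Finset.Icc 1 L → Q' ≠ Finset.Icc 1 s →
      (P 0 ∪ ⋃ i ∈ Finset.Icc 1 t, P i) ∪ {a} ⊆ (P 0 ∪ ⋃ i ∈ Q', P i) →
      Finset.Icc 1 (t + 1) ⊆ Q') ∧
    (t = s - 1 → ¬ ((P 0 ∪ ⋃ i ∈ Finset.Icc 1 t, P i) ∪ {a} ⊆ H'Q)) := by
  have haP : a ∈ P (t + 1) := by
    rcases ha with ⟨_, h⟩ | ⟨_, h⟩
    · exact h.1
    · exact h
  have htL : t + 1 ≤ L := by omega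
  have key : ∀ Q' : Finset ℕ, Q' ⊆ Finset.Icc 1 L → ∀ j, 1 ≤ j → j ≤ L →
      ∀ x ∈ P j, x ∈ P 0 ∪ ⋃ i ∈ Q', P i → j ∈ Q' := by
    intro Q' hQ' j hj1 hjL x hx hx'
    rcases hx' with h0 | hU
    · exact absurd h0 (Set.disjoint_left.mp (hdisj j hjL 0 (Nat.zero_le L) (by omega)) hx)
    · simp only [Set.mem_iUnion, exists_prop] at hU
      obtain ⟨i, hiQ, hxi⟩ := hU
      have hi := hQ' hiQ
      simp only [Finset.mem_Icc] at hi
      by_contra hne'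
      have hij : i ≠ j := fun h => hne' (h ▸ hiQ)
      exact Set.disjoint_left.mp (hdisj i hi.2 j hjL hij) hxi hx
  constructor
  · intro Q' hQ'sub _ hsub j hj
    simp only [Finset.mem_Icc] at hj
    by_cases hjt : j = t + 1
    · subst hjt
      exact key Q' hQ'sub.1 (t + 1) (by omega) htL a haP (hsub (Or.inr rfl))
    · obtain ⟨x, hx⟩ := hne j hj.1 (by omega)
      have hxL : x ∈ (P 0 ∪ ⋃ i ∈ Finset.Icc 1 t, P i) ∪ {a} := by
        left; right
        simp only [Set.mem_iUnion, exists_prop]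
        exact ⟨j, by simp only [Finset.mem_Icc]; omega, hx⟩
      exact key Q' hQ'sub.1 j hj.1 (by omega) x hx (hsub hxL)
  · intro hts hsub
    rcases ha with ⟨_, haa⟩ | ⟨hPs, _⟩
    · exact haa.2 (hsub (Or.inr rfl))
    · apply hH'.2
      intro x hx
      rcases hx with h0 | hU
      · exact hsub (Or.inl (Or.inl h0))
      · simp only [Set.mem_iUnion, exists_prop, Finset.mem_Icc] at hU
        obtain ⟨i, ⟨hi1, his⟩, hxi⟩ := hU
        by_cases h : i ≤ t
        · refine hsub (Or.inl (Or.inr ?_))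
          simp only [Set.mem_iUnion, exists_prop]
          exact ⟨i, by simp only [Finset.mem_Icc]; omega, hxi⟩
        · have hit : i = t + 1 := by omega
          exact hPs (hit ▸ hxi)
end

section
/- Let 𝔸 be a minimal cover of [1:m] by at least two subsets, let H ⊆ [1:m], and suppose there exist H₁, H₂ ∈ 𝔸 with T := H₁ ∩ H₂ ⊋ H, and a designated element x ∈ [1:m] \ T. Then x ∉ H₁ or x ∉ H₂; without loss of generality say x ∉ H₁. Moreover there exists a ∈ H₁ with a ∉ ⋃_{A ∈ 𝔸 \ {H₁}} A, so that any superset of H ∪ {a} within 𝔸 must equal H₁, and H₁ contains the set T with x ∉ H₁. -/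
/-- Case 3 of the look-ahead-and-skip theorem. For a minimal cover
𝔸 of [1:m] with at least two members, H₁, H₂ ∈ 𝔸 with T = H₁ ∩ H₂ ⊋ H, and a
designated x ∈ [1:m] \ T: x avoids H₁ or H₂, and for whichever A ∈ {H₁, H₂}
avoids x there is a ∈ A unique to A among 𝔸, so any member of 𝔸 containing
H ∪ {a} equals A, while T ⊆ A and x ∉ A. -/
theorem look_ahead_case_three
    (m : ℕ) (hm : 1 ≤ m) (𝔸 : Set (Set ℕ))
    (hsub : ∀ A ∈ 𝔸, A ⊆ Set.Icc 1 m)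
    (hcover : ⋃₀ 𝔸 = Set.Icc 1 m)
    (hmin : ∀ 𝔹 ⊂ 𝔸, ⋃₀ 𝔹 ⊂ Set.Icc 1 m)
    (htwo : ∃ A ∈ 𝔸, ∃ B ∈ 𝔸, A ≠ B)
    (H H₁ H₂ : Set ℕ) (hH : H ⊆ Set.Icc 1 m)
    (h1 : H₁ ∈ 𝔸) (h2 : H₂ ∈ 𝔸) (hT : H ⊂ H₁ ∩ H₂)
    (x : ℕ) (hx : x ∈ Set.Icc 1 m \ (H₁ ∩ H₂)) :
    (x ∉ H₁ ∨ x ∉ H₂) ∧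
    ∀ A ∈ ({H₁, H₂} : Set (Set ℕ)), x ∉ A →
      ∃ a ∈ A, (∀ B ∈ 𝔸, B ≠ A → a ∉ B) ∧
        (∀ B ∈ 𝔸, H ∪ {a} ⊆ B → B = A) ∧
        H₁ ∩ H₂ ⊆ A ∧ x ∉ A := by
  obtain ⟨hxm, hxT⟩ := hx
  constructor
  · by_contra h
    push_neg at h
    exact hxT ⟨h.1, h.2⟩
  · intro A hA hxA
    have hAmem : A ∈ 𝔸 := by rcases hA with rfl | rfl; exacts [h1, h2]
    have hss : 𝔸 \ {A} ⊂ 𝔸 := by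
      constructor
      · exact Set.diff_subset
      · intro h
        exact (h hAmem).2 rfl
    obtain ⟨hsub', hne⟩ := hmin _ hss
    rw [Set.subset_def] at hne
    push_neg at hne
    obtain ⟨a, ham, hnotin⟩ := hne
    have haU : a ∈ ⋃₀ 𝔸 := hcover ▸ ham
    obtain ⟨B, hB, haB⟩ := haU
    have hBA : B = A := by
      by_contra h
      exact hnotin ⟨B, ⟨hB, h⟩, haB⟩
    subst hBA
    refine ⟨a, haB, ?_, ?_, ?_, hxA⟩
    · intro C hC hCne haC
      exact hnotin ⟨C, ⟨hC, hCne⟩, haC⟩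
    · intro C hC hHC
      by_contra h
      exact hnotin ⟨C, ⟨hC, h⟩, hHC (Or.inr rfl)⟩
    · rcases hA with rfl | rfl
      exacts [Set.inter_subset_left, Set.inter_subset_right]
end
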